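/- For n ≥ 3 and 0 ≤ i ≤ n−1, the refined affine Eulerian polynomials of type D satisfy T̃_{n,i}(x) = x²·Σ_{j=0}^{i−1} T_{n−1,j}(x) + x·Σ_{j=i}^{2n−i−3} T_{n−1,j}(x) + Σ_{j=2n−i−2}^{2n−3} T_{n−1,j}(x), and the symmetry T̃_{n,2n−i−1}(x) = T̃_{n,i}(x). -/

import Mathlib

open Polynomial

/-- `f` has only real zeros (every complex zero is real). -/
def RealRooted (f : Polynomial ℝ) : Prop :=
  ∀ z : ℂ, z ∈ (f.map (algebraMap ℝ ℂ)).roots → z.im = 0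

/-- all zeros of `f` are real (counted with multiplicity). -/
def AllRealRoots (f : Polynomial ℝ) : Prop :=
  f.roots.card = f.natDegree

/-- two polynomials are compatible if every nonnegative linear combination
has only real zeros. -/
def Compatible (f g : Polynomial ℝ) : Prop :=
  ∀ c d : ℝ, 0 ≤ c → 0 ≤ d → RealRooted (C c * f + C d * g)

/-- `Interlaces g f` means `g ⪯ f`: both are real-rooted with positive leading
coefficients, and listing the zeros in decreasing order `u` (of `f`) and `v`
(of `g`), either `deg f = deg g` and `vₙ ≤ uₙ ≤ ⋯ ≤ v₁ ≤ u₁`, or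
`deg f = deg g + 1` and `uₙ ≤ vₙ₋₁ ≤ ⋯ ≤ v₁ ≤ u₁`. -/
def Interlaces (g f : Polynomial ℝ) : Prop :=
  0 < f.leadingCoeff ∧ 0 < g.leadingCoeff ∧
  ∃ u v : List ℝ,
    u.Pairwise (· ≥ ·) ∧ v.Pairwise (· ≥ ·) ∧
    f.roots = (u : Multiset ℝ) ∧ g.roots = (v : Multiset ℝ) ∧
    u.length = f.natDegree ∧ v.length = g.natDegree ∧
    (u.length = v.length ∨ u.length = v.length + 1) ∧
    (∀ (i : ℕ) (hv : i < v.length) (hu : i < u.length),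
      v.get ⟨i, hv⟩ ≤ u.get ⟨i, hu⟩) ∧
    (∀ (i : ℕ) (hu : i + 1 < u.length) (hv : i < v.length),
      u.get ⟨i + 1, hu⟩ ≤ v.get ⟨i, hv⟩)

/-- the finite set of type `D` inversion sequences: `e : Fin n → ℕ` with
`e i < 2(i+1)`. -/
def invSeqs (n : ℕ) : Finset (Fin n → ℕ) :=
  ((Finset.univ : Finset (Fin n → Fin (2 * n + 1))).image
      (fun e => fun i => (e i : ℕ))).filter
    (fun e => ∀ i : Fin n, e i < 2 * ((i : ℕ) + 1))

/-- value of an inversion sequence at (0-indexed) position `i`. -/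
def ev {n : ℕ} (e : Fin n → ℕ) (i : ℕ) : ℕ :=
  if h : i < n then e ⟨i, h⟩ else 0

/-- the type `D` ascent statistic:
`asc_D e = χ(e₁ + e₂/2 ≥ 3/2) + #{i ∈ [n-1] : eᵢ/i < eᵢ₊₁/(i+1)}`
(1-indexed). -/
noncomputable def ascD {n : ℕ} (e : Fin n → ℕ) : ℕ :=
  (if 3 ≤ 2 * ev e 0 + ev e 1 then 1 else 0) +
    ((Finset.Ico 1 n).filter
      (fun i => (i + 1) * ev e (i - 1) < i * ev e i)).card

/-- `exc e = #{i : eᵢ ≥ i}` (1-indexed). -/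
noncomputable def excD {n : ℕ} (e : Fin n → ℕ) : ℕ :=
  ((Finset.range n).filter (fun j => j + 1 ≤ ev e j)).card

/-- the affine type `D` ascent statistic:
`ãsc_D e = asc_D e + χ(e_{n-1}/(n-1) + e_n/n < (2n-1)/n)`. -/
noncomputable def affAscD {n : ℕ} (e : Fin n → ℕ) : ℕ :=
  ascD e +
    (if n * ev e (n - 2) + (n - 1) * ev e (n - 1) < (n - 1) * (2 * n - 1)
      then 1 else 0)

/-- the refined Eulerian polynomial `T_{n,i}(x)` of type `D`. -/
noncomputable def TD (n i : ℕ) : Polynomial ℝ :=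
  ∑ e ∈ (invSeqs n).filter (fun e => ev e (n - 1) = i), X ^ ascD e

/-- the refined `q`-Eulerian polynomial `T_{n,i}(x;q)` of type `D`. -/
noncomputable def TqD (n i : ℕ) (q : ℝ) : Polynomial ℝ :=
  ∑ e ∈ (invSeqs n).filter (fun e => ev e (n - 1) = i),
    C q ^ excD e * X ^ ascD e

/-- the refined affine Eulerian polynomial `T̃_{n,i}(x)` of type `D`. -/
noncomputable def TtD (n i : ℕ) : Polynomial ℝ :=
  ∑ e ∈ (invSeqs n).filter (fun e => ev e (n - 1) = i), X ^ affAscD e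

/-!
Deleting the last entry `k` of a type `D` inversion sequence of length `m + 1` is a bijection
onto the sequences of length `m`. It loses only the ascent at the last position and the affine
ascent, and how many of these there are depends only on `k` and the last entry `j` of the
shortened sequence. For `k ≤ m` that number is `2`, `1` or `0` according as `j < k`,
`k ≤ j < 2m - k` or `2m - k ≤ j`; replacing `k` by `2m + 1 - k` exchanges the two conditions.
-/

open Finset

lemma mem_invSeqs {n : ℕ} {e : Fin n → ℕ} :
    e ∈ invSeqs n ↔ ∀ i : Fin n, e i < 2 * ((i : ℕ) + 1) := by
  refine ⟨fun h => (mem_filter.1 h).2, fun h => mem_filter.2 ⟨mem_image.2 ?_, h⟩⟩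
  exact ⟨fun i => ⟨e i, by have := h i; omega⟩, mem_univ _, rfl⟩

lemma ev_lt_of_mem_invSeqs {n : ℕ} {e : Fin n → ℕ} (he : e ∈ invSeqs n) {j : ℕ}
    (hj : j < n) : ev e j < 2 * (j + 1) := by
  simpa [ev, hj] using mem_invSeqs.1 he ⟨j, hj⟩

section snoc

variable {m : ℕ} (e : Fin m → ℕ) (k : ℕ)

lemma ev_snoc_of_lt {j : ℕ} (hj : j < m) :
    ev (Fin.snoc (α := fun _ => ℕ) e k) j = ev e j := by
  simpa [ev, hj, show j < m + 1 by omega] using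
    Fin.snoc_castSucc (α := fun _ => ℕ) (p := e) k ⟨j, hj⟩

lemma ev_snoc_self : ev (Fin.snoc (α := fun _ => ℕ) e k) m = k := by
  simp only [ev, Nat.lt_succ_self, dite_true]
  exact Fin.snoc_last (α := fun _ => ℕ) (p := e) k

lemma ascD_snoc (hm : 2 ≤ m) :
    ascD (Fin.snoc (α := fun _ => ℕ) e k) =
      ascD e + if (m + 1) * ev e (m - 1) < m * k then 1 else 0 := by
  simp only [ascD, card_filter, sum_Ico_succ_top (by omega : 1 ≤ m), ev_snoc_self,
    ev_snoc_of_lt e k (by omega : 0 < m), ev_snoc_of_lt e k (by omega : 1 < m),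
    ev_snoc_of_lt e k (by omega : m - 1 < m)]
  rw [sum_congr rfl fun i hi => by
    obtain ⟨-, hi⟩ := mem_Ico.1 hi
    rw [ev_snoc_of_lt e k (by omega), ev_snoc_of_lt e k hi]]
  omega

end snoc

/-- The ascents created by appending `k` to a sequence of length `m` whose last entry is `j`:
the ascent `j/m < k/(m+1)` and the affine ascent `j/m + k/(m+1) < (2m+1)/(m+1)`. -/
def tailAscents (m j k : ℕ) : ℕ :=
  (if (m + 1) * j < m * k then 1 else 0) +
    if (m + 1) * j + m * k < m * (2 * m + 1) then 1 else 0

lemma affAscD_snoc {m : ℕ} (e : Fin m → ℕ) (k : ℕ) (hm : 2 ≤ m) :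
    affAscD (Fin.snoc (α := fun _ => ℕ) e k) = ascD e + tailAscents m (ev e (m - 1)) k := by
  rw [affAscD, ascD_snoc e k hm, Nat.add_sub_cancel, show m + 1 - 2 = m - 1 by omega,
    show 2 * (m + 1) - 1 = 2 * m + 1 by omega, ev_snoc_self, ev_snoc_of_lt e k (by omega),
    tailAscents, add_assoc]

lemma sum_invSeqs_succ_filter_last {M : Type*} [AddCommMonoid M] {m k : ℕ} (hk : k < 2 * (m + 1))
    (f : (Fin (m + 1) → ℕ) → M) :
    ∑ e ∈ (invSeqs (m + 1)).filter (fun e => ev e m = k), f e =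
      ∑ e ∈ invSeqs m, f (Fin.snoc (α := fun _ => ℕ) e k) := by
  have ev_last (e : Fin (m + 1) → ℕ) : ev e m = e (Fin.last m) := by simp [ev, Fin.last]
  symm
  refine sum_nbij' (fun e => Fin.snoc e k) Fin.init (fun e he => ?_) (fun e he => ?_)
    (fun e _ => Fin.init_snoc _ _) (fun e he => ?_) (fun _ _ => rfl)
  · refine mem_filter.2 ⟨mem_invSeqs.2 fun i => ?_, ev_snoc_self e k⟩
    induction i using Fin.lastCases with
    | last => simpa using hk
    | cast i => simpa using mem_invSeqs.1 he i
  · exact mem_invSeqs.2 fun i => mem_invSeqs.1 (mem_filter.1 he).1 i.castSucc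
  · obtain ⟨-, he⟩ := mem_filter.1 he
    rw [ev_last] at he
    simpa [he] using Fin.snoc_init_self (α := fun _ => ℕ) e

lemma sum_invSeqs_pow_ascD_add {m : ℕ} (hm : 1 ≤ m) (w : ℕ → ℕ) :
    ∑ e ∈ invSeqs m, (X : ℝ[X]) ^ (ascD e + w (ev e (m - 1))) =
      ∑ j ∈ range (2 * m), X ^ w j * TD m j := by
  have last_lt (e : Fin m → ℕ) (he : e ∈ invSeqs m) : ev e (m - 1) ∈ range (2 * m) := by
    simpa [Nat.sub_add_cancel hm] using ev_lt_of_mem_invSeqs he (by omega : m - 1 < m)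
  rw [← sum_fiberwise_of_maps_to last_lt]
  refine sum_congr rfl fun j _ => ?_
  rw [TD, mul_sum]
  refine sum_congr rfl fun e he => ?_
  rw [(mem_filter.1 he).2, pow_add, mul_comm]

lemma TtD_succ {m k : ℕ} (hm : 2 ≤ m) (hk : k < 2 * (m + 1)) :
    TtD (m + 1) k = ∑ j ∈ range (2 * m), X ^ tailAscents m j k * TD m j := by
  rw [TtD, Nat.add_sub_cancel, sum_invSeqs_succ_filter_last hk,
    ← sum_invSeqs_pow_ascD_add (by omega)]
  simp only [affAscD_snoc _ k hm]

lemma tailAscents_reflect {m j k : ℕ} (hk : k ≤ 2 * m + 1) :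
    tailAscents m j (2 * m + 1 - k) = tailAscents m j k := by
  have hsum : m * (2 * m + 1 - k) + m * k = m * (2 * m + 1) := by
    rw [← Nat.mul_add, Nat.sub_add_cancel hk]
  have swap_asc :
      (m + 1) * j < m * (2 * m + 1 - k) ↔ (m + 1) * j + m * k < m * (2 * m + 1) := by omega
  have swap_affAsc :
      (m + 1) * j + m * (2 * m + 1 - k) < m * (2 * m + 1) ↔ (m + 1) * j < m * k := by omega
  rw [tailAscents, tailAscents, add_comm]
  simp only [swap_asc, swap_affAsc]

lemma tailAscents_of_le {m j k : ℕ} (hk : k ≤ m) :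
    tailAscents m j k = (if j < k then 1 else 0) + if j + k < 2 * m then 1 else 0 := by
  have asc : (m + 1) * j < m * k ↔ j < k := by
    constructor <;> intro h
    · by_contra! h'
      nlinarith
    · nlinarith
  have affAsc : (m + 1) * j + m * k < m * (2 * m + 1) ↔ j + k < 2 * m := by
    constructor <;> intro h
    · by_contra! h'
      nlinarith
    · nlinarith
  simp only [tailAscents, asc, affAsc]

lemma TtD_succ_of_le {m k : ℕ} (hm : 2 ≤ m) (hk : k ≤ m) :
    TtD (m + 1) k = X ^ 2 * ∑ j ∈ range k, TD m j + X * ∑ j ∈ Ico k (2 * m - k), TD m j +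
      ∑ j ∈ Ico (2 * m - k) (2 * m), TD m j := by
  rw [TtD_succ hm (by omega), ← sum_range_add_sum_Ico _ (by omega : 2 * m - k ≤ 2 * m),
    ← sum_range_add_sum_Ico _ (by omega : k ≤ 2 * m - k), mul_sum, mul_sum]
  refine congrArg₂ (· + ·) (congrArg₂ (· + ·) ?_ ?_) ?_ <;>
    refine sum_congr rfl fun j hj => ?_ <;>
    simp only [mem_range, mem_Ico] at hj <;>
    rw [tailAscents_of_le hk]
  · rw [if_pos hj, if_pos (by omega)]
  · rw [if_neg (by omega), if_pos (by omega), pow_one]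
  · rw [if_neg (by omega), if_neg (by omega), pow_zero, one_mul]

/-- The refined affine Eulerian polynomials of type `D` expand in terms of the
`T_{n-1,j}` and satisfy the symmetry `T̃_{n,2n-i-1} = T̃_{n,i}`. -/
theorem Ttilde_recurrence (n i : ℕ) (hn : 3 ≤ n) (hi : i ≤ n - 1) :
    TtD n i = X ^ 2 * ∑ j ∈ Finset.range i, TD (n - 1) j +
      X * ∑ j ∈ Finset.Icc i (2 * n - i - 3), TD (n - 1) j +
      ∑ j ∈ Finset.Icc (2 * n - i - 2) (2 * n - 3), TD (n - 1) j ∧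
    TtD n (2 * n - i - 1) = TtD n i := by
  obtain ⟨m, rfl⟩ : ∃ m, n = m + 1 := ⟨n - 1, by omega⟩
  have hm : 2 ≤ m := by omega
  have him : i ≤ m := by omega
  refine ⟨?_, ?_⟩
  · rw [TtD_succ_of_le hm him, show 2 * (m + 1) - i - 3 = 2 * m - i - 1 by omega,
      show 2 * (m + 1) - i - 2 = 2 * m - i by omega, show 2 * (m + 1) - 3 = 2 * m - 1 by omega,
      Icc_sub_one_right_eq_Ico_of_not_isMin (by simp; omega),
      Icc_sub_one_right_eq_Ico_of_not_isMin (by simp; omega), Nat.add_sub_cancel]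
  · rw [show 2 * (m + 1) - i - 1 = 2 * m + 1 - i by omega, TtD_succ hm (by omega),
      TtD_succ hm (by omega)]
    simp only [tailAscents_reflect (by omega : i ≤ 2 * m + 1)]
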